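/- Let γ > β > 0 and let h lie in H_γ with weak derivative g and with h(∞) := lim_{x→∞} h(x) = 0. Then the function x ↦ h(x) e^{(β/2)x} on [0,∞) satisfies h(x)e^{(β/2)x} = h(0) + ∫₀ˣ (g(t) + (β/2) h(t)) e^{(β/2)t} dt for all x ≥ 0, and one has the estimates ∫₀^∞ |h(x) e^{(β/2)x}|² dx ≤ (1/(γ(γ−β))) ‖h‖_γ² and ∫₀^∞ |(g(x) + (β/2) h(x)) e^{(β/2)x}|² dx ≤ (2 + β²/(2γ(γ−β))) ‖h‖_γ². In particular x ↦ h(x)e^{(β/2)x} belongs to the Sobolev space W¹((0,∞)), with W¹-norm at most C‖h‖_γ where C² = 2 + (1 + β²/2)/(γ(γ−β)). -/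

import Mathlib

open MeasureTheory Real Filter Set

/-!
Since `h(∞) = 0`, the tail formula `h x = -∫_{(x,∞)} g` holds, and Cauchy–Schwarz against the
weight `e^{γt}` gives the pointwise decay `h(x)² ≤ ‖h‖²_γ e^{-γx} / γ`. This decay beats the
growth `e^{βx}` of the squared weight because `β < γ`, which gives the first `L²` bound; the
second follows from `(a + b)² ≤ 2a² + 2b²` and `e^{βx} ≤ e^{γx}`. The product formula is
integration by parts for the absolutely continuous primitive `h` against `e^{(β/2)x}`.
-/

section WeightedCauchySchwarz

variable {α : Type*} [MeasurableSpace α] {μ : Measure α} {f w : α → ℝ}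

theorem memLp_two_mul_sqrt (hf : AEStronglyMeasurable f μ) (hw_meas : AEStronglyMeasurable w μ)
    (hw : ∀ a, 0 < w a) (hfw : Integrable (fun a => f a ^ 2 * w a) μ) :
    MemLp (fun a => f a * √(w a)) 2 μ := by
  refine (memLp_two_iff_integrable_sq (by fun_prop)).2 (hfw.congr (ae_of_all _ fun a => ?_))
  dsimp only
  rw [mul_pow, sq_sqrt (hw a).le]

theorem memLp_two_inv_sqrt (hw_meas : AEStronglyMeasurable w μ)
    (hw : ∀ a, 0 < w a) (hw_inv : Integrable (fun a => (w a)⁻¹) μ) :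
    MemLp (fun a => (√(w a))⁻¹) 2 μ := by
  refine (memLp_two_iff_integrable_sq (by fun_prop)).2 (hw_inv.congr (ae_of_all _ fun a => ?_))
  dsimp only
  rw [inv_pow, sq_sqrt (hw a).le]

theorem integrable_of_integrable_sq_mul (hf : AEStronglyMeasurable f μ)
    (hw_meas : AEStronglyMeasurable w μ) (hw : ∀ a, 0 < w a)
    (hfw : Integrable (fun a => f a ^ 2 * w a) μ) (hw_inv : Integrable (fun a => (w a)⁻¹) μ) :
    Integrable f μ := by
  have hprod := (memLp_two_mul_sqrt hf hw_meas hw hfw).integrable_mul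
    (memLp_two_inv_sqrt hw_meas hw hw_inv)
  refine hprod.congr (ae_of_all _ fun a => ?_)
  simp [(sqrt_pos.2 (hw a)).ne']

theorem sq_integral_abs_le_integral_sq_mul_mul_integral_inv (hf : AEStronglyMeasurable f μ)
    (hw_meas : AEStronglyMeasurable w μ) (hw : ∀ a, 0 < w a)
    (hfw : Integrable (fun a => f a ^ 2 * w a) μ) (hw_inv : Integrable (fun a => (w a)⁻¹) μ) :
    (∫ a, |f a| ∂μ) ^ 2 ≤ (∫ a, f a ^ 2 * w a ∂μ) * ∫ a, (w a)⁻¹ ∂μ := by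
  have hfw' : Integrable (fun a => |f a| ^ 2 * w a) μ := by simpa only [sq_abs] using hfw
  -- Hölder with `p = q = 2` for `|f| = (|f| √w) · (√w)⁻¹`.
  have holder := integral_mul_le_Lp_mul_Lq_of_nonneg Real.HolderConjugate.two_two
    (ae_of_all μ fun a => mul_nonneg (abs_nonneg (f a)) (sqrt_nonneg (w a)))
    (ae_of_all μ fun a => inv_nonneg.2 (sqrt_nonneg (w a)))
    (by simpa using memLp_two_mul_sqrt (by fun_prop) hw_meas hw hfw')
    (by simpa using memLp_two_inv_sqrt hw_meas hw hw_inv)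
  have hsqrt : ∀ a, √(w a) * (√(w a))⁻¹ = 1 := fun a => mul_inv_cancel₀ (sqrt_pos.2 (hw a)).ne'
  have hsq : ∀ a, (|f a| * √(w a)) ^ (2 : ℝ) = f a ^ 2 * w a ∧ (√(w a))⁻¹ ^ (2 : ℝ) = (w a)⁻¹ :=
    fun a => by simp [mul_pow, sq_sqrt (hw a).le]
  simp only [mul_assoc, hsqrt, mul_one, hsq, ← sqrt_eq_rpow] at holder
  calc (∫ a, |f a| ∂μ) ^ 2
      ≤ (√(∫ a, f a ^ 2 * w a ∂μ) * √(∫ a, (w a)⁻¹ ∂μ)) ^ 2 :=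
        pow_le_pow_left₀ (integral_nonneg fun a => abs_nonneg _) holder 2
    _ = _ := by
        rw [mul_pow, sq_sqrt (integral_nonneg fun a => by have := hw a; positivity),
          sq_sqrt (integral_nonneg fun a => (inv_pos.2 (hw a)).le)]

end WeightedCauchySchwarz

theorem integrable_and_integral_le_of_le {α : Type*} [MeasurableSpace α] {μ : Measure α}
    {f G : α → ℝ} (hf : AEStronglyMeasurable f μ) (hG : Integrable G μ) (hf0 : 0 ≤ᵐ[μ] f)
    (hfG : f ≤ᵐ[μ] G) : Integrable f μ ∧ ∫ a, f a ∂μ ≤ ∫ a, G a ∂μ := by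
  refine ⟨hG.mono' hf ?_, integral_mono_of_nonneg hf0 hG hfG⟩
  filter_upwards [hf0, hfG] with a ha haG
  rwa [norm_of_nonneg ha]

theorem mul_eq_add_integral_of_eq_add_integral {h g φ φ' : ℝ → ℝ} {a b : ℝ} (hab : a ≤ b)
    (hg : IntervalIntegrable g volume a b) (hh : ∀ x ∈ Icc a b, h x = h a + ∫ t in a..x, g t)
    (hφ : ∀ x, HasDerivAt φ (φ' x) x) (hφ' : Continuous φ') :
    h b * φ b = h a * φ a + ∫ t in a..b, g t * φ t + h t * φ' t := by
  set H := fun x => h a + ∫ t in a..x, g t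
  have hH : AbsolutelyContinuousOnInterval H a b :=
    contDiffOn_const.absolutelyContinuousOnInterval.add
      (hg.absolutelyContinuousOnInterval_intervalIntegral left_mem_uIcc)
  have hφ_C1 : ContDiff ℝ 1 φ := by
    rw [contDiff_one_iff_deriv]
    exact ⟨fun x => (hφ x).differentiableAt, by simpa [funext fun x => (hφ x).deriv] using hφ'⟩
  have hparts := hH.integral_deriv_mul_eq_sub hφ_C1.contDiffOn.absolutelyContinuousOnInterval
  have hHa : H a = h a := by simp [H]
  have hHb : H b = h b := (hh b (right_mem_Icc.2 hab)).symm
  have hintegrand : ∫ x in a..b, deriv H x * φ x + H x * deriv φ x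
      = ∫ t in a..b, g t * φ t + h t * φ' t := by
    refine intervalIntegral.integral_congr_ae ?_
    filter_upwards [hg.ae_hasDerivAt_integral] with x hx hx_mem
    have hx_Icc : x ∈ Icc a b := Ioc_subset_Icc_self (uIoc_of_le hab ▸ hx_mem)
    have hx_uIcc : x ∈ uIcc a b := uIcc_of_le hab ▸ hx_Icc
    rw [((hx hx_uIcc a left_mem_uIcc).const_add (h a)).deriv, (hφ x).deriv, hh x hx_Icc]
  rw [hHa, hHb, hintegrand] at hparts
  linarith

theorem eq_neg_integral_Ioi_of_tendsto_zero {h g : ℝ → ℝ} {a : ℝ} (hg : IntegrableOn g (Ioi a))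
    (hh : ∀ x ≥ a, h x = h a + ∫ t in a..x, g t) (hlim : Tendsto h atTop (nhds 0))
    {x : ℝ} (hx : a ≤ x) : h x = -∫ t in Ioi x, g t := by
  have hg_ii : ∀ y ≥ a, IntervalIntegrable g volume a y := fun y hy =>
    (intervalIntegrable_iff_integrableOn_Ioc_of_le hy).2 (hg.mono_set Ioc_subset_Ioi_self)
  have hincr : ∀ᶠ y in atTop, h y = h x + ∫ t in x..y, g t := by
    filter_upwards [eventually_ge_atTop x] with y hy
    rw [hh y (hx.trans hy), hh x hx, ← intervalIntegral.integral_interval_sub_left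
      (hg_ii y (hx.trans hy)) (hg_ii x hx)]
    ring
  have hlim' : Tendsto h atTop (nhds (h x + ∫ t in Ioi x, g t)) :=
    (tendsto_const_nhds.add (intervalIntegral_tendsto_integral_Ioi x
      (hg.mono_set (Ioi_subset_Ioi hx)) tendsto_id)).congr' (hincr.mono fun y hy => hy.symm)
  linarith [tendsto_nhds_unique hlim' hlim]

theorem continuousOn_Ici_of_eq_add_integral {h g : ℝ → ℝ} {a : ℝ} (hg : IntegrableOn g (Ioi a))
    (hh : ∀ x ≥ a, h x = h a + ∫ t in a..x, g t) : ContinuousOn h (Ici a) := by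
  have hprim := ((integrable_indicator_iff measurableSet_Ioi).2 hg).continuous_primitive a
  refine (hprim.const_add (h a)).continuousOn.congr fun x hx => ?_
  dsimp only
  rw [hh x hx, intervalIntegral.integral_of_le hx, intervalIntegral.integral_of_le hx]
  exact congrArg _ (setIntegral_congr_fun measurableSet_Ioc fun t ht =>
    (indicator_of_mem (Ioi_subset_Ioi le_rfl ht.1) g).symm)

section ExponentialWeight

variable {g : ℝ → ℝ} {γ : ℝ}

theorem integrableOn_inv_exp_mul_Ioi (hγ : 0 < γ) (a : ℝ) :
    IntegrableOn (fun t => (exp (γ * t))⁻¹) (Ioi a) := by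
  simpa only [← exp_neg, ← neg_mul] using integrableOn_exp_mul_Ioi (neg_lt_zero.2 hγ) a

theorem integrableOn_Ioi_of_integrableOn_sq_mul_exp (hγ : 0 < γ) {a : ℝ}
    (hg : AEStronglyMeasurable g (volume.restrict (Ioi a)))
    (hgw : IntegrableOn (fun t => g t ^ 2 * exp (γ * t)) (Ioi a)) : IntegrableOn g (Ioi a) :=
  integrable_of_integrable_sq_mul hg (by fun_prop) (fun t => exp_pos _) hgw
    (integrableOn_inv_exp_mul_Ioi hγ a)

theorem sq_integral_abs_Ioi_le (hγ : 0 < γ) {a : ℝ}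
    (hg : AEStronglyMeasurable g (volume.restrict (Ioi a)))
    (hgw : IntegrableOn (fun t => g t ^ 2 * exp (γ * t)) (Ioi a)) :
    (∫ t in Ioi a, |g t|) ^ 2 ≤ (∫ t in Ioi a, g t ^ 2 * exp (γ * t)) / γ * exp (-γ * a) := by
  have hcs := sq_integral_abs_le_integral_sq_mul_mul_integral_inv hg (by fun_prop)
    (fun t => exp_pos _) hgw (integrableOn_inv_exp_mul_Ioi hγ a)
  have hexp : ∫ t in Ioi a, (exp (γ * t))⁻¹ = exp (-γ * a) / γ := by
    simp only [← exp_neg, ← neg_mul]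
    rw [integral_exp_mul_Ioi (neg_lt_zero.2 hγ), neg_div_neg_eq]
  rw [hexp, mul_div_assoc'] at hcs
  rwa [div_mul_eq_mul_div]

theorem sq_le_mul_exp_neg_of_tendsto_zero {h : ℝ → ℝ} (hγ : 0 < γ) {a : ℝ}
    (hg : AEStronglyMeasurable g (volume.restrict (Ioi a)))
    (hgw : IntegrableOn (fun t => g t ^ 2 * exp (γ * t)) (Ioi a))
    (hh : ∀ x ≥ a, h x = h a + ∫ t in a..x, g t) (hlim : Tendsto h atTop (nhds 0))
    {x : ℝ} (hx : a ≤ x) :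
    h x ^ 2 ≤ (∫ t in Ioi a, g t ^ 2 * exp (γ * t)) / γ * exp (-γ * x) := by
  have hg_int := integrableOn_Ioi_of_integrableOn_sq_mul_exp hγ hg hgw
  have hgw_x := hgw.mono_set (Ioi_subset_Ioi hx)
  have htail_le : ∫ t in Ioi x, g t ^ 2 * exp (γ * t) ≤ ∫ t in Ioi a, g t ^ 2 * exp (γ * t) :=
    setIntegral_mono_set hgw (ae_of_all _ fun t => by positivity) (Ioi_subset_Ioi hx).eventuallyLE
  calc h x ^ 2 = |∫ t in Ioi x, g t| ^ 2 := by
        rw [eq_neg_integral_Ioi_of_tendsto_zero hg_int hh hlim hx, neg_sq, sq_abs]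
    _ ≤ (∫ t in Ioi x, |g t|) ^ 2 := by gcongr; exact abs_integral_le_integral_abs
    _ ≤ (∫ t in Ioi x, g t ^ 2 * exp (γ * t)) / γ * exp (-γ * x) :=
        sq_integral_abs_Ioi_le hγ
          (hg.mono_measure (Measure.restrict_mono_set _ (Ioi_subset_Ioi hx))) hgw_x
    _ ≤ (∫ t in Ioi a, g t ^ 2 * exp (γ * t)) / γ * exp (-γ * x) := by gcongr

theorem mul_exp_half_sq (u c x : ℝ) : (u * exp (c / 2 * x)) ^ 2 = u ^ 2 * exp (c * x) := by
  rw [mul_pow, ← exp_nat_mul]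
  ring_nf

theorem integrableOn_and_integral_mul_exp_sq_le {h : ℝ → ℝ} {β C : ℝ} (hβγ : β < γ)
    (hh : AEStronglyMeasurable h (volume.restrict (Ioi 0)))
    (hdecay : ∀ x ≥ 0, h x ^ 2 ≤ C * exp (-γ * x)) :
    IntegrableOn (fun x => (h x * exp (β / 2 * x)) ^ 2) (Ioi 0) ∧
      ∫ x in Ioi 0, (h x * exp (β / 2 * x)) ^ 2 ≤ C / (γ - β) := by
  have hbound : ∀ x ≥ 0, (h x * exp (β / 2 * x)) ^ 2 ≤ C * exp (-(γ - β) * x) := fun x hx =>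
    calc (h x * exp (β / 2 * x)) ^ 2 = h x ^ 2 * exp (β * x) := mul_exp_half_sq _ _ _
      _ ≤ C * exp (-γ * x) * exp (β * x) := by gcongr; exact hdecay x hx
      _ = C * exp (-(γ - β) * x) := by rw [mul_assoc, ← exp_add]; ring_nf
  have hexp : ∫ x in Ioi (0 : ℝ), C * exp (-(γ - β) * x) = C / (γ - β) := by
    rw [integral_const_mul, integral_exp_mul_Ioi (by linarith)]
    field_simp
    simp
  rw [← hexp]
  refine integrable_and_integral_le_of_le (by fun_prop)
    ((integrableOn_exp_mul_Ioi (by linarith) 0).const_mul C)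
    (ae_of_all _ fun x => sq_nonneg _) ?_
  filter_upwards [ae_restrict_mem measurableSet_Ioi] with x hx using hbound x (le_of_lt hx)

theorem integrableOn_and_integral_add_mul_exp_sq_le {h : ℝ → ℝ} {β : ℝ} (hβγ : β ≤ γ)
    (hg : AEStronglyMeasurable g (volume.restrict (Ioi 0)))
    (hgw : IntegrableOn (fun t => g t ^ 2 * exp (γ * t)) (Ioi 0))
    (hh : AEStronglyMeasurable h (volume.restrict (Ioi 0)))
    (hhw : IntegrableOn (fun x => (h x * exp (β / 2 * x)) ^ 2) (Ioi 0)) :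
    IntegrableOn (fun x => ((g x + β / 2 * h x) * exp (β / 2 * x)) ^ 2) (Ioi 0) ∧
      ∫ x in Ioi 0, ((g x + β / 2 * h x) * exp (β / 2 * x)) ^ 2
        ≤ 2 * (∫ t in Ioi 0, g t ^ 2 * exp (γ * t))
          + β ^ 2 / 2 * ∫ x in Ioi 0, (h x * exp (β / 2 * x)) ^ 2 := by
  have hbound : ∀ x ≥ 0, ((g x + β / 2 * h x) * exp (β / 2 * x)) ^ 2
      ≤ 2 * (g x ^ 2 * exp (γ * x)) + β ^ 2 / 2 * (h x * exp (β / 2 * x)) ^ 2 := fun x hx =>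
    calc ((g x + β / 2 * h x) * exp (β / 2 * x)) ^ 2
        = (g x * exp (β / 2 * x) + β / 2 * (h x * exp (β / 2 * x))) ^ 2 := by ring
      _ ≤ 2 * ((g x * exp (β / 2 * x)) ^ 2 + (β / 2 * (h x * exp (β / 2 * x))) ^ 2) := add_sq_le
      _ = 2 * (g x ^ 2 * exp (β * x)) + β ^ 2 / 2 * (h x * exp (β / 2 * x)) ^ 2 := by
        rw [mul_exp_half_sq]; ring
      _ ≤ 2 * (g x ^ 2 * exp (γ * x)) + β ^ 2 / 2 * (h x * exp (β / 2 * x)) ^ 2 := by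
        gcongr
  have hsplit : ∫ x in Ioi 0, 2 * (g x ^ 2 * exp (γ * x)) + β ^ 2 / 2 * (h x * exp (β / 2 * x)) ^ 2
      = 2 * (∫ t in Ioi 0, g t ^ 2 * exp (γ * t))
        + β ^ 2 / 2 * ∫ x in Ioi 0, (h x * exp (β / 2 * x)) ^ 2 := by
    rw [integral_add (hgw.const_mul 2) (hhw.const_mul _), integral_const_mul, integral_const_mul]
  rw [← hsplit]
  refine integrable_and_integral_le_of_le (by fun_prop) ((hgw.const_mul 2).add (hhw.const_mul _))
    (ae_of_all _ fun x => sq_nonneg _) ?_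
  filter_upwards [ae_restrict_mem measurableSet_Ioi] with x hx using hbound x (le_of_lt hx)

end ExponentialWeight

theorem mul_exp_eq_add_integral {h g : ℝ → ℝ} (c : ℝ) (hg : IntegrableOn g (Ioi 0))
    (hh : ∀ y ≥ 0, h y = h 0 + ∫ t in 0..y, g t) {x : ℝ} (hx : 0 ≤ x) :
    h x * exp (c * x) = h 0 + ∫ t in 0..x, (g t + c * h t) * exp (c * t) := by
  have hexp_deriv : ∀ t, HasDerivAt (fun t => exp (c * t)) (exp (c * t) * c) t :=
    fun t => by simpa using ((hasDerivAt_id t).const_mul c).exp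
  rw [mul_eq_add_integral_of_eq_add_integral hx
    ((intervalIntegrable_iff_integrableOn_Ioc_of_le hx).2 (hg.mono_set Ioc_subset_Ioi_self))
    (fun y hy => hh y hy.1) hexp_deriv (by fun_prop)]
  simp only [mul_zero, exp_zero, mul_one]
  congr 1
  refine intervalIntegral.integral_congr fun t _ => ?_
  ring

/-- If `γ > β > 0` and `h` lies in `H_γ` with weak derivative `g` and `h(∞) = 0`, then
`x ↦ h(x)e^{(β/2)x}` is absolutely continuous on `[0,∞)` with weak derivative
`x ↦ (g(x) + (β/2)h(x))e^{(β/2)x}`, and it belongs to the Sobolev space `W¹((0,∞))`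
with the indicated norm estimates. -/
theorem Hgamma_to_Sobolev
    (β γ : ℝ) (hβ : 0 < β) (hβγ : β < γ) (h g : ℝ → ℝ)
    (hg_meas : Measurable g)
    (hg_int : IntegrableOn (fun t => g t ^ 2 * Real.exp (γ * t)) (Set.Ioi 0))
    (hFTC : ∀ x ≥ (0 : ℝ), h x = h 0 + ∫ t in (0:ℝ)..x, g t)
    (hlim : Tendsto h atTop (nhds 0)) :
    (∀ x ≥ (0 : ℝ), h x * Real.exp (β / 2 * x)
        = h 0 + ∫ t in (0:ℝ)..x, (g t + β / 2 * h t) * Real.exp (β / 2 * t)) ∧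
      IntegrableOn (fun x => (h x * Real.exp (β / 2 * x)) ^ 2) (Set.Ioi 0) ∧
      (∫ x in Set.Ioi (0:ℝ), (h x * Real.exp (β / 2 * x)) ^ 2)
        ≤ (1 / (γ * (γ - β))) *
            (|h 0| ^ 2 + ∫ t in Set.Ioi (0:ℝ), g t ^ 2 * Real.exp (γ * t)) ∧
      IntegrableOn (fun x => ((g x + β / 2 * h x) * Real.exp (β / 2 * x)) ^ 2) (Set.Ioi 0) ∧
      (∫ x in Set.Ioi (0:ℝ), ((g x + β / 2 * h x) * Real.exp (β / 2 * x)) ^ 2)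
        ≤ (2 + β ^ 2 / (2 * γ * (γ - β))) *
            (|h 0| ^ 2 + ∫ t in Set.Ioi (0:ℝ), g t ^ 2 * Real.exp (γ * t)) ∧
      (∫ x in Set.Ioi (0:ℝ), (h x * Real.exp (β / 2 * x)) ^ 2)
          + (∫ x in Set.Ioi (0:ℝ), ((g x + β / 2 * h x) * Real.exp (β / 2 * x)) ^ 2)
        ≤ (2 + (1 + β ^ 2 / 2) / (γ * (γ - β))) *
            (|h 0| ^ 2 + ∫ t in Set.Ioi (0:ℝ), g t ^ 2 * Real.exp (γ * t)) := by
  have hγ : 0 < γ := hβ.trans hβγ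
  have hγβ : 0 < γ * (γ - β) := mul_pos hγ (sub_pos.2 hβγ)
  have hg_aesm : AEStronglyMeasurable g (volume.restrict (Ioi 0)) := hg_meas.aestronglyMeasurable
  have hg_int' := integrableOn_Ioi_of_integrableOn_sq_mul_exp hγ hg_aesm hg_int
  have hh_meas : AEStronglyMeasurable h (volume.restrict (Ioi 0)) :=
    (continuousOn_Ici_of_eq_add_integral hg_int' hFTC).mono Ioi_subset_Ici_self
      |>.aestronglyMeasurable measurableSet_Ioi
  obtain ⟨hφ_int, hφ_le⟩ := integrableOn_and_integral_mul_exp_sq_le hβγ hh_meas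
    fun x hx => sq_le_mul_exp_neg_of_tendsto_zero hγ hg_aesm hg_int hFTC hlim hx
  obtain ⟨hψ_int, hψ_le⟩ := integrableOn_and_integral_add_mul_exp_sq_le hβγ.le hg_aesm hg_int
    hh_meas hφ_int
  set N := |h 0| ^ 2 + ∫ t in Ioi (0 : ℝ), g t ^ 2 * exp (γ * t)
  have hφ_N : ∫ x in Ioi 0, (h x * exp (β / 2 * x)) ^ 2 ≤ N / (γ * (γ - β)) :=
    hφ_le.trans (by rw [div_div]; gcongr; exact le_add_of_nonneg_left (sq_nonneg _))
  have hψ_N : ∫ x in Ioi 0, ((g x + β / 2 * h x) * exp (β / 2 * x)) ^ 2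
      ≤ 2 * N + β ^ 2 / 2 * (N / (γ * (γ - β))) :=
    hψ_le.trans (by gcongr; exact le_add_of_nonneg_left (sq_nonneg _))
  have hconst : (2 + (1 + β ^ 2 / 2) / (γ * (γ - β))) * N
      = N / (γ * (γ - β)) + (2 * N + β ^ 2 / 2 * (N / (γ * (γ - β)))) := by
    field_simp; ring
  refine ⟨fun x hx => mul_exp_eq_add_integral (β / 2) hg_int' hFTC hx, hφ_int,
    by rwa [one_div_mul_eq_div], hψ_int, hψ_N.trans_eq (by field_simp), by linarith⟩
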